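/- arXiv:2603.23060 — 4 statements merged into one kernel-verified Lean document; each statement's English description precedes it below -/
import Mathlib

section
/- Let p, q: ℝ² → ℂ be smooth functions of (x, t) satisfying the unreduced Gerdjikov–Ivanov system p_t = p_{xx} − 2p²q_x − 2p³q² and q_t = −q_{xx} − 2q²p_x + 2p²q³ at every point. Then r := −p_x + p²q satisfies, together with q, the unreduced nonlinear Schrödinger system: r_t = r_{xx} − 2qr² and q_t = −q_{xx} + 2q²r. -/
noncomputable section

def pdx (f : ℝ × ℝ → ℂ) (p : ℝ × ℝ) : ℂ :=
  deriv (fun s => f (s, p.2)) p.1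

def pdt (f : ℝ × ℝ → ℂ) (p : ℝ × ℝ) : ℂ :=
  deriv (fun s => f (p.1, s)) p.2

lemma sliceX (f : ℝ × ℝ → ℂ) (hf : ContDiff ℝ (⊤ : ℕ∞) f) (t : ℝ) :
    Differentiable ℝ (fun s => f (s, t)) :=
  (hf.comp (contDiff_id.prodMk contDiff_const)).differentiable (by simp)

lemma sliceT (f : ℝ × ℝ → ℂ) (hf : ContDiff ℝ (⊤ : ℕ∞) f) (x : ℝ) :
    Differentiable ℝ (fun s => f (x, s)) :=
  (hf.comp (contDiff_const.prodMk contDiff_id)).differentiable (by simp)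

lemma hdx (f : ℝ × ℝ → ℂ) (hf : ContDiff ℝ (⊤ : ℕ∞) f) (z : ℝ × ℝ) :
    HasDerivAt (fun s => f (s, z.2)) (pdx f z) z.1 :=
  (sliceX f hf z.2 z.1).hasDerivAt

lemma hdt (f : ℝ × ℝ → ℂ) (hf : ContDiff ℝ (⊤ : ℕ∞) f) (z : ℝ × ℝ) :
    HasDerivAt (fun s => f (z.1, s)) (pdt f z) z.2 :=
  (sliceT f hf z.1 z.2).hasDerivAt

lemma pdx_fderiv (f : ℝ × ℝ → ℂ) (hf : ContDiff ℝ (⊤ : ℕ∞) f) (z : ℝ × ℝ) :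
    pdx f z = fderiv ℝ f z ((1 : ℝ), (0 : ℝ)) := by
  have h1 : HasFDerivAt (fun s : ℝ => (s, z.2))
      ((ContinuousLinearMap.id ℝ ℝ).prod 0) z.1 :=
    (hasFDerivAt_id _).prodMk (hasFDerivAt_const _ _)
  have hf' : HasFDerivAt f (fderiv ℝ f z) (z.1, z.2) := by
    simpa using (hf.differentiable (by simp) z).hasFDerivAt
  have h2 := (hf'.comp z.1 h1).hasDerivAt
  simpa [pdx, Function.comp_def] using h2.deriv

lemma pdt_fderiv (f : ℝ × ℝ → ℂ) (hf : ContDiff ℝ (⊤ : ℕ∞) f) (z : ℝ × ℝ) :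
    pdt f z = fderiv ℝ f z ((0 : ℝ), (1 : ℝ)) := by
  have h1 : HasFDerivAt (fun s : ℝ => (z.1, s))
      ((0 : ℝ →L[ℝ] ℝ).prod (ContinuousLinearMap.id ℝ ℝ)) z.2 :=
    (hasFDerivAt_const _ _).prodMk (hasFDerivAt_id _)
  have hf' : HasFDerivAt f (fderiv ℝ f z) (z.1, z.2) := by
    simpa using (hf.differentiable (by simp) z).hasFDerivAt
  have h2 := (hf'.comp z.2 h1).hasDerivAt
  simpa [pdt, Function.comp_def] using h2.deriv

lemma contDiff_fderiv_apply (f : ℝ × ℝ → ℂ) (hf : ContDiff ℝ (⊤ : ℕ∞) f) (v : ℝ × ℝ) :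
    ContDiff ℝ (⊤ : ℕ∞) (fun z => fderiv ℝ f z v) :=
  (ContinuousLinearMap.apply ℝ ℂ v).contDiff.comp (hf.fderiv_right (by simp))

lemma contDiff_pdx (f : ℝ × ℝ → ℂ) (hf : ContDiff ℝ (⊤ : ℕ∞) f) :
    ContDiff ℝ (⊤ : ℕ∞) (pdx f) := by
  have : pdx f = fun z => fderiv ℝ f z ((1:ℝ), (0:ℝ)) := funext (pdx_fderiv f hf)
  rw [this]; exact contDiff_fderiv_apply f hf _

lemma fderiv_apply_const (f : ℝ × ℝ → ℂ) (hf : ContDiff ℝ (⊤ : ℕ∞) f) (v u : ℝ × ℝ)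
    (z : ℝ × ℝ) :
    fderiv ℝ (fun w => fderiv ℝ f w v) z u = fderiv ℝ (fderiv ℝ f) z u v := by
  have hD : DifferentiableAt ℝ (fderiv ℝ f) z :=
    ((hf.fderiv_right (by simp) : ContDiff ℝ (⊤ : ℕ∞) (fderiv ℝ f)).differentiable (by simp)) z
  have h : HasFDerivAt (fun w => fderiv ℝ f w v)
      (((ContinuousLinearMap.apply ℝ ℂ) v).comp (fderiv ℝ (fderiv ℝ f) z)) z :=
    ((ContinuousLinearMap.apply ℝ ℂ v).hasFDerivAt.comp z hD.hasFDerivAt)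
  rw [h.fderiv]; rfl

lemma pdt_pdx_comm (f : ℝ × ℝ → ℂ) (hf : ContDiff ℝ (⊤ : ℕ∞) f) (z : ℝ × ℝ) :
    pdt (pdx f) z = pdx (pdt f) z := by
  have hx : pdx f = fun w => fderiv ℝ f w ((1:ℝ), (0:ℝ)) := funext (pdx_fderiv f hf)
  have ht : pdt f = fun w => fderiv ℝ f w ((0:ℝ), (1:ℝ)) := funext (pdt_fderiv f hf)
  have hsymm := (hf.contDiffAt (x := z)).isSymmSndFDerivAt (n := (⊤ : ℕ∞)) (by rw [minSmoothness_of_isRCLikeNormedField]; exact WithTop.coe_le_coe.2 le_top)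
  rw [hx, ht, pdt_fderiv _ (contDiff_fderiv_apply f hf _) z,
    pdx_fderiv _ (contDiff_fderiv_apply f hf _) z,
    fderiv_apply_const f hf _ _ z, fderiv_apply_const f hf _ _ z]
  exact hsymm _ _

/-- **Riccati-type Miura transformation from the Gerdjikov–Ivanov system to the
unreduced NLS (AKNS) system.**  If `p_t = p_{xx} − 2p²q_x − 2p³q²` and
`q_t = −q_{xx} − 2q²p_x + 2p²q³`, then `r := −p_x + p²q` satisfies
`r_t = r_{xx} − 2qr²` and `q_t = −q_{xx} + 2q²r`. -/
theorem GI_miura_to_NLS (p q : ℝ × ℝ → ℂ)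
    (hp : ContDiff ℝ (⊤ : ℕ∞) p) (hq : ContDiff ℝ (⊤ : ℕ∞) q)
    (hGI1 : ∀ z, pdt p z = pdx (pdx p) z - 2 * (p z) ^ 2 * pdx q z
      - 2 * (p z) ^ 3 * (q z) ^ 2)
    (hGI2 : ∀ z, pdt q z = -(pdx (pdx q) z) - 2 * (q z) ^ 2 * pdx p z
      + 2 * (p z) ^ 2 * (q z) ^ 3) :
    (∀ z, pdt (fun w => -(pdx p w) + (p w) ^ 2 * q w) z =
      pdx (pdx (fun w => -(pdx p w) + (p w) ^ 2 * q w)) z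
        - 2 * q z * (-(pdx p z) + (p z) ^ 2 * q z) ^ 2) ∧
    (∀ z, pdt q z = -(pdx (pdx q) z)
        + 2 * (q z) ^ 2 * (-(pdx p z) + (p z) ^ 2 * q z)) := by
  have hpx : ContDiff ℝ (⊤ : ℕ∞) (pdx p) := contDiff_pdx p hp
  have hqx : ContDiff ℝ (⊤ : ℕ∞) (pdx q) := contDiff_pdx q hq
  have hpxx : ContDiff ℝ (⊤ : ℕ∞) (pdx (pdx p)) := contDiff_pdx _ hpx
  set R : ℝ × ℝ → ℂ := fun w => -(pdx p w) + (p w) ^ 2 * q w with hR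
  -- first x-derivative of R
  have hRx : ∀ w, pdx R w = -(pdx (pdx p) w)
      + ((pdx p w * p w + p w * pdx p w) * q w + p w * p w * pdx q w) := by
    intro w
    have hP := hdx p hp w
    have hQ := hdx q hq w
    have h := ((hdx (pdx p) hpx w).neg).add ((hP.mul hP).mul hQ)
    have heq : (fun s => R (s, w.2)) = fun s =>
        -(pdx p (s, w.2)) + p (s, w.2) * p (s, w.2) * q (s, w.2) := by
      funext s; rw [hR]; ring
    show deriv (fun s => R (s, w.2)) w.1 = _
    rw [heq]; exact h.deriv
  -- second x-derivative of R
  have hRxx : ∀ z, pdx (pdx R) z =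
      -(pdx (pdx (pdx p)) z) + 2 * (pdx p z) ^ 2 * q z
        + 2 * p z * pdx (pdx p) z * q z + 4 * p z * pdx p z * pdx q z
        + (p z) ^ 2 * pdx (pdx q) z := by
    intro z
    have hP := hdx p hp z
    have hP1 := hdx (pdx p) hpx z
    have hQ := hdx q hq z
    have hQ1 := hdx (pdx q) hqx z
    have h := ((hdx (pdx (pdx p)) hpxx z).neg).add
      ((((hP1.mul hP).add (hP.mul hP1)).mul hQ).add ((hP.mul hP).mul hQ1))
    have heq : (fun s => pdx R (s, z.2)) = fun s =>
        -(pdx (pdx p) (s, z.2))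
          + ((pdx p (s, z.2) * p (s, z.2) + p (s, z.2) * pdx p (s, z.2))
              * q (s, z.2)
            + p (s, z.2) * p (s, z.2) * pdx q (s, z.2)) :=
      funext fun s => hRx (s, z.2)
    show deriv (fun s => pdx R (s, z.2)) z.1 = _
    rw [heq]; refine h.deriv.trans ?_; simp only [Pi.mul_apply, Pi.add_apply, Prod.mk.eta]; ring
  -- t-derivative of R
  have hRt : ∀ z, pdt R z = -(pdt (pdx p) z)
      + 2 * p z * pdt p z * q z + (p z) ^ 2 * pdt q z := by
    intro z
    have hP := hdt p hp z
    have hQ := hdt q hq z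
    have h := ((hdt (pdx p) hpx z).neg).add ((hP.mul hP).mul hQ)
    have heq : (fun s => R (z.1, s)) = fun s =>
        -(pdx p (z.1, s)) + p (z.1, s) * p (z.1, s) * q (z.1, s) := by
      funext s; rw [hR]; ring
    show deriv (fun s => R (z.1, s)) z.2 = _
    rw [heq]; refine h.deriv.trans ?_; simp only [Pi.mul_apply, Prod.mk.eta]; ring
  -- mixed derivative via commutation and GI1
  have hmix : ∀ z, pdt (pdx p) z =
      pdx (pdx (pdx p)) z - 4 * p z * pdx p z * pdx q z
        - 2 * (p z) ^ 2 * pdx (pdx q) z - 6 * (p z) ^ 2 * pdx p z * (q z) ^ 2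
        - 4 * (p z) ^ 3 * q z * pdx q z := by
    intro z
    have hP := hdx p hp z
    have hP1 := hdx (pdx p) hpx z
    have hQ := hdx q hq z
    have hQ1 := hdx (pdx q) hqx z
    have hPP := hP.mul hP
    have hPPP := hPP.mul hP
    have hQQ := hQ.mul hQ
    have h := ((hdx (pdx (pdx p)) hpxx z).sub
      ((hPP.const_mul (2:ℂ)).mul hQ1)).sub ((hPPP.const_mul (2:ℂ)).mul hQQ)
    have heq : (fun s => pdt p (s, z.2)) = fun s =>
        pdx (pdx p) (s, z.2)
          - 2 * (p (s, z.2) * p (s, z.2)) * pdx q (s, z.2)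
          - 2 * (p (s, z.2) * p (s, z.2) * p (s, z.2))
            * (q (s, z.2) * q (s, z.2)) := by
      funext s; rw [hGI1 (s, z.2)]; ring
    rw [pdt_pdx_comm p hp z]
    show deriv (fun s => pdt p (s, z.2)) z.1 = _
    rw [heq]; refine h.deriv.trans ?_; simp only [Pi.mul_apply, Prod.mk.eta]; ring
  constructor
  · intro z
    rw [hRt z, hRxx z, hmix z, hGI1 z, hGI2 z]; ring
  · intro z
    rw [hGI2 z]; ring

end
end

section
/- Let p, q, s: ℝ² → ℂ be smooth functions of (x, t) with s nowhere zero, and let γ ∈ ℤ. Assume at every point: p_t = p_{xx} − 2p²q_x − 2p³q²; q_t = −q_{xx} − 2q²p_x + 2p²q³; s_x = −pq·s; and s_t = (pq_x − p_xq + p²q²)·s. Then u := s^γ·p and v := s^{−γ}·q satisfy the generalized derivative NLS system: u_t = u_{xx} + 2γ·u u_x v + 2(γ−1)·u² v_x − (γ−1)(γ−2)·u³v², and v_t = −v_{xx} + 2γ·u v v_x + 2(γ−1)·u_x v² + (γ−1)(γ−2)·u²v³. -/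
noncomputable section

lemma line_x_contDiff {f : ℝ × ℝ → ℂ} (hf : ContDiff ℝ (⊤ : ℕ∞) f) (t0 : ℝ) :
    ContDiff ℝ (⊤ : ℕ∞) (fun x => f (x, t0)) :=
  (hf.of_le (by simp)).comp (contDiff_id.prodMk contDiff_const)

lemma hd_x {f : ℝ × ℝ → ℂ} (hf : ContDiff ℝ (⊤ : ℕ∞) f) (z : ℝ × ℝ) :
    HasDerivAt (fun x => f (x, z.2)) (pdx f z) z.1 :=
  (((line_x_contDiff hf z.2).differentiable (by simp)) z.1).hasDerivAt

lemma hd_xx {f : ℝ × ℝ → ℂ} (hf : ContDiff ℝ (⊤ : ℕ∞) f) (z : ℝ × ℝ) :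
    HasDerivAt (fun x => pdx f (x, z.2)) (pdx (pdx f) z) z.1 := by
  have h : ContDiff ℝ (⊤ : ℕ∞) (deriv (fun x => f (x, z.2))) :=
    (contDiff_infty_iff_deriv.mp (line_x_contDiff hf z.2)).2
  exact ((h.differentiable (by simp)) z.1).hasDerivAt

lemma hd_t {f : ℝ × ℝ → ℂ} (hf : ContDiff ℝ (⊤ : ℕ∞) f) (z : ℝ × ℝ) :
    HasDerivAt (fun t => f (z.1, t)) (pdt f z) z.2 :=
  ((((hf.of_le (m := (⊤ : ℕ∞)) (by simp)).comp (contDiff_const.prodMk contDiff_id)).differentiable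
    (by simp)) z.2).hasDerivAt

lemma key_x (s p q f : ℝ × ℝ → ℂ) (m : ℤ)
    (hs : ContDiff ℝ (⊤ : ℕ∞) s) (hf : ContDiff ℝ (⊤ : ℕ∞) f) (hs0 : ∀ z, s z ≠ 0)
    (hsx : ∀ z, pdx s z = -(p z * q z) * s z) (z : ℝ × ℝ) :
    pdx (fun w => s w ^ m * f w) z
      = s z ^ m * (pdx f z - m * (p z * q z) * f z) := by
  have hS : HasDerivAt (fun x => s (x, z.2) ^ m)
      ((m : ℂ) * s z ^ (m - 1) * pdx s z) z.1 :=
    by have := (hasDerivAt_zpow (𝕜 := ℂ) m (s z) (Or.inl (hs0 z))).comp z.1 (hd_x hs z); exact this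
  have h2 : deriv (fun x => s (x, z.2) ^ m * f (x, z.2)) z.1
      = ((m : ℂ) * s z ^ (m - 1) * pdx s z) * f z + s z ^ m * pdx f z :=
    (hS.mul (hd_x hf z)).deriv
  refine h2.trans ?_
  rw [hsx z, zpow_sub_one₀ (hs0 z)]
  field_simp [hs0 z]
  ring

lemma key_t (s p q f : ℝ × ℝ → ℂ) (m : ℤ)
    (hs : ContDiff ℝ (⊤ : ℕ∞) s) (hf : ContDiff ℝ (⊤ : ℕ∞) f) (hs0 : ∀ z, s z ≠ 0)
    (hst : ∀ z, pdt s z = (p z * pdx q z - pdx p z * q z + (p z) ^ 2 * (q z) ^ 2) * s z)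
    (z : ℝ × ℝ) :
    pdt (fun w => s w ^ m * f w) z
      = s z ^ m * (pdt f z
          + m * (p z * pdx q z - pdx p z * q z + (p z) ^ 2 * (q z) ^ 2) * f z) := by
  have hS : HasDerivAt (fun t => s (z.1, t) ^ m)
      ((m : ℂ) * s z ^ (m - 1) * pdt s z) z.2 :=
    by have := (hasDerivAt_zpow (𝕜 := ℂ) m (s z) (Or.inl (hs0 z))).comp z.2 (hd_t hs z); exact this
  have h2 : deriv (fun t => s (z.1, t) ^ m * f (z.1, t)) z.2
      = ((m : ℂ) * s z ^ (m - 1) * pdt s z) * f z + s z ^ m * pdt f z :=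
    (hS.mul (hd_t hf z)).deriv
  refine h2.trans ?_
  rw [hst z, zpow_sub_one₀ (hs0 z)]
  field_simp [hs0 z]
  ring

lemma key_xx (s p q f : ℝ × ℝ → ℂ) (m : ℤ)
    (hs : ContDiff ℝ (⊤ : ℕ∞) s) (hp : ContDiff ℝ (⊤ : ℕ∞) p) (hq : ContDiff ℝ (⊤ : ℕ∞) q)
    (hf : ContDiff ℝ (⊤ : ℕ∞) f) (hs0 : ∀ z, s z ≠ 0)
    (hsx : ∀ z, pdx s z = -(p z * q z) * s z) (z : ℝ × ℝ) :
    pdx (pdx (fun w => s w ^ m * f w)) z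
      = s z ^ m * (pdx (pdx f) z
          - m * ((pdx p z * q z + p z * pdx q z) * f z + (p z * q z) * pdx f z)
          - m * (p z * q z) * (pdx f z - m * (p z * q z) * f z)) := by
  have h1 : pdx (fun w => s w ^ m * f w)
      = fun w => s w ^ m * (pdx f w - m * (p w * q w) * f w) :=
    funext (key_x s p q f m hs hf hs0 hsx)
  rw [h1]
  have hS : HasDerivAt (fun x => s (x, z.2) ^ m)
      ((m : ℂ) * s z ^ (m - 1) * pdx s z) z.1 :=
    by have := (hasDerivAt_zpow (𝕜 := ℂ) m (s z) (Or.inl (hs0 z))).comp z.1 (hd_x hs z); exact this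
  have hG : HasDerivAt
      (fun x => pdx f (x, z.2) - (m : ℂ) * (p (x, z.2) * q (x, z.2)) * f (x, z.2))
      (pdx (pdx f) z
        - ((m : ℂ) * (pdx p z * q z + p z * pdx q z) * f z
            + (m : ℂ) * (p z * q z) * pdx f z)) z.1 := by
    have := (hd_xx hf z).sub
      ((((hd_x hp z).mul (hd_x hq z)).const_mul (m : ℂ)).mul (hd_x hf z))
    convert this using 1 <;> rfl
  have h2 : deriv (fun x => s (x, z.2) ^ m
        * (pdx f (x, z.2) - (m : ℂ) * (p (x, z.2) * q (x, z.2)) * f (x, z.2))) z.1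
      = ((m : ℂ) * s z ^ (m - 1) * pdx s z)
          * (pdx f z - (m : ℂ) * (p z * q z) * f z)
        + s z ^ m * (pdx (pdx f) z
            - ((m : ℂ) * (pdx p z * q z + p z * pdx q z) * f z
                + (m : ℂ) * (p z * q z) * pdx f z)) :=
    (hS.mul hG).deriv
  refine h2.trans ?_
  rw [hsx z, zpow_sub_one₀ (hs0 z)]
  field_simp [hs0 z]
  ring

/-- **Gauge transformation from the Gerdjikov–Ivanov system to the generalized
derivative NLS system.**  If `(p,q)` solve the unreduced GI system, `s` is a nowhere
vanishing gauge factor with `s_x = −pq·s` and `s_t = (pq_x − p_xq + p²q²)·s`, and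
`γ ∈ ℤ`, then `u := s^γ·p` and `v := s^{−γ}·q` satisfy the generalized DNLS system. -/
theorem GI_gauge_to_GDNLS (p q s : ℝ × ℝ → ℂ) (γ : ℤ)
    (hp : ContDiff ℝ (⊤ : ℕ∞) p) (hq : ContDiff ℝ (⊤ : ℕ∞) q) (hs : ContDiff ℝ (⊤ : ℕ∞) s)
    (hs0 : ∀ z, s z ≠ 0)
    (hGI1 : ∀ z, pdt p z = pdx (pdx p) z - 2 * (p z) ^ 2 * pdx q z
      - 2 * (p z) ^ 3 * (q z) ^ 2)
    (hGI2 : ∀ z, pdt q z = -(pdx (pdx q) z) - 2 * (q z) ^ 2 * pdx p z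
      + 2 * (p z) ^ 2 * (q z) ^ 3)
    (hsx : ∀ z, pdx s z = -(p z * q z) * s z)
    (hst : ∀ z, pdt s z = (p z * pdx q z - pdx p z * q z + (p z) ^ 2 * (q z) ^ 2) * s z) :
    (∀ z, pdt (fun w => s w ^ γ * p w) z =
      pdx (pdx (fun w => s w ^ γ * p w)) z
      + 2 * (γ : ℂ) * (s z ^ γ * p z) * pdx (fun w => s w ^ γ * p w) z * (s z ^ (-γ) * q z)
      + 2 * ((γ : ℂ) - 1) * (s z ^ γ * p z) ^ 2 * pdx (fun w => s w ^ (-γ) * q w) z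
      - ((γ : ℂ) - 1) * ((γ : ℂ) - 2) * (s z ^ γ * p z) ^ 3 * (s z ^ (-γ) * q z) ^ 2) ∧
    (∀ z, pdt (fun w => s w ^ (-γ) * q w) z =
      -(pdx (pdx (fun w => s w ^ (-γ) * q w)) z)
      + 2 * (γ : ℂ) * (s z ^ γ * p z) * (s z ^ (-γ) * q z) * pdx (fun w => s w ^ (-γ) * q w) z
      + 2 * ((γ : ℂ) - 1) * pdx (fun w => s w ^ γ * p w) z * (s z ^ (-γ) * q z) ^ 2
      + ((γ : ℂ) - 1) * ((γ : ℂ) - 2) * (s z ^ γ * p z) ^ 2 * (s z ^ (-γ) * q z) ^ 3) := by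
  constructor
  · intro z
    rw [key_t s p q p γ hs hp hs0 hst z, key_xx s p q p γ hs hp hq hp hs0 hsx z,
        key_x s p q p γ hs hp hs0 hsx z, key_x s p q q (-γ) hs hq hs0 hsx z, hGI1 z]
    have hSne : s z ^ γ ≠ 0 := zpow_ne_zero γ (hs0 z)
    rw [zpow_neg]
    push_cast
    field_simp [hSne]
    ring
  · intro z
    rw [key_t s p q q (-γ) hs hq hs0 hst z, key_xx s p q q (-γ) hs hp hq hq hs0 hsx z,
        key_x s p q p γ hs hp hs0 hsx z, key_x s p q q (-γ) hs hq hs0 hsx z, hGI2 z]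
    have hSne : s z ^ γ ≠ 0 := zpow_ne_zero γ (hs0 z)
    rw [zpow_neg]
    push_cast
    field_simp
    have hone : (s z ^ γ) ^ 8 * ((s z ^ γ)⁻¹) ^ 8 = 1 := by
      rw [inv_pow, mul_inv_cancel₀ (pow_ne_zero _ hSne)]
    ring

end
end

section
/- Let δ = ±1, γ ∈ ℝ, let u: ℝ² → ℂ be a smooth function of (ζ, τ) satisfying the Gerdjikov–Ivanov equation i·u_τ + u_{ζζ} + 2iδ·u²·conj(u)_ζ + 2|u|⁴u = 0 at every point, and let h: ℝ² → ℝ be smooth with h_ζ = |u|² and h_τ = i(conj(u)·u_ζ − u·conj(u)_ζ) − δ|u|⁴ at every point. Then w := u·exp(iγδh) satisfies the generalized derivative NLS equation i·w_τ + w_{ζζ} − 2iγδ·|w|²·w_ζ − 2i(γ−1)δ·w²·conj(w)_ζ + (γ−1)(γ−2)·|w|⁴·w = 0. -/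
noncomputable section

open Complex

/-- Partial derivative in the first coordinate `ζ` of `ℝ²`, for complex-valued functions. -/
def pdζ (f : ℝ × ℝ → ℂ) (p : ℝ × ℝ) : ℂ :=
  deriv (fun s => f (s, p.2)) p.1

/-- Partial derivative in the second coordinate `τ`, for complex-valued functions. -/
def pdτ (f : ℝ × ℝ → ℂ) (p : ℝ × ℝ) : ℂ :=
  deriv (fun s => f (p.1, s)) p.2

/-- Partial derivative in the first coordinate `ζ`, for real-valued functions. -/
def pdζR (f : ℝ × ℝ → ℝ) (p : ℝ × ℝ) : ℝ :=
  deriv (fun s => f (s, p.2)) p.1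

/-- Partial derivative in the second coordinate `τ`, for real-valued functions. -/
def pdτR (f : ℝ × ℝ → ℝ) (p : ℝ × ℝ) : ℝ :=
  deriv (fun s => f (p.1, s)) p.2

private lemma hasDerivAt_fst' {F : Type*} [NormedAddCommGroup F] [NormedSpace ℝ F]
    {f : ℝ × ℝ → F} (hf : ContDiff ℝ (⊤ : ℕ∞) f) (p : ℝ × ℝ) :
    HasDerivAt (fun s => f (s, p.2)) (fderiv ℝ f p (1, 0)) p.1 := by
  have h1 : HasDerivAt (fun s : ℝ => ((s, p.2) : ℝ × ℝ)) ((1 : ℝ), (0 : ℝ)) p.1 :=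
    (hasDerivAt_id p.1).prodMk (hasDerivAt_const p.1 p.2)
  have h2 : HasFDerivAt f (fderiv ℝ f (p.1, p.2)) (p.1, p.2) :=
    (hf.differentiable (by simp) (p.1, p.2)).hasFDerivAt
  exact h2.comp_hasDerivAt p.1 h1

private lemma hasDerivAt_snd' {F : Type*} [NormedAddCommGroup F] [NormedSpace ℝ F]
    {f : ℝ × ℝ → F} (hf : ContDiff ℝ (⊤ : ℕ∞) f) (p : ℝ × ℝ) :
    HasDerivAt (fun s => f (p.1, s)) (fderiv ℝ f p (0, 1)) p.2 := by
  have h1 : HasDerivAt (fun s : ℝ => ((p.1, s) : ℝ × ℝ)) ((0 : ℝ), (1 : ℝ)) p.2 :=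
    (hasDerivAt_const p.2 p.1).prodMk (hasDerivAt_id p.2)
  have h2 : HasFDerivAt f (fderiv ℝ f (p.1, p.2)) (p.1, p.2) :=
    (hf.differentiable (by simp) (p.1, p.2)).hasFDerivAt
  exact h2.comp_hasDerivAt p.2 h1

private lemma pdζ_slice {f : ℝ × ℝ → ℂ} (hf : ContDiff ℝ (⊤ : ℕ∞) f) (p : ℝ × ℝ) :
    HasDerivAt (fun s => f (s, p.2)) (pdζ f p) p.1 := by
  have h := hasDerivAt_fst' hf p
  have h2 : pdζ f p = fderiv ℝ f p (1, 0) := h.deriv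
  rw [h2]; exact h

private lemma pdτ_slice {f : ℝ × ℝ → ℂ} (hf : ContDiff ℝ (⊤ : ℕ∞) f) (p : ℝ × ℝ) :
    HasDerivAt (fun s => f (p.1, s)) (pdτ f p) p.2 := by
  have h := hasDerivAt_snd' hf p
  have h2 : pdτ f p = fderiv ℝ f p (0, 1) := h.deriv
  rw [h2]; exact h

private lemma pdζR_slice {f : ℝ × ℝ → ℝ} (hf : ContDiff ℝ (⊤ : ℕ∞) f) (p : ℝ × ℝ) :
    HasDerivAt (fun s => f (s, p.2)) (pdζR f p) p.1 := by
  have h := hasDerivAt_fst' hf p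
  have h2 : pdζR f p = fderiv ℝ f p (1, 0) := h.deriv
  rw [h2]; exact h

private lemma pdτR_slice {f : ℝ × ℝ → ℝ} (hf : ContDiff ℝ (⊤ : ℕ∞) f) (p : ℝ × ℝ) :
    HasDerivAt (fun s => f (p.1, s)) (pdτR f p) p.2 := by
  have h := hasDerivAt_snd' hf p
  have h2 : pdτR f p = fderiv ℝ f p (0, 1) := h.deriv
  rw [h2]; exact h

private lemma contDiff_pdζ' {f : ℝ × ℝ → ℂ} (hf : ContDiff ℝ (⊤ : ℕ∞) f) : ContDiff ℝ (⊤ : ℕ∞) (pdζ f) := by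
  have h : pdζ f = fun p => fderiv ℝ f p (1, 0) := funext fun p => (hasDerivAt_fst' hf p).deriv
  rw [h]
  exact (hf.fderiv_right (by simp)).clm_apply contDiff_const

/-- **Gauge transformation from the Gerdjikov–Ivanov equation to the generalized
derivative NLS equation.**  If `u` solves the GI equation
`i·u_τ + u_{ζζ} + 2iδu²·conj(u)_ζ + 2|u|⁴u = 0` and `h` is a real potential with
`h_ζ = |u|²`, `h_τ = i(conj(u)u_ζ − u·conj(u)_ζ) − δ|u|⁴`, then `w := u·exp(iγδh)`
solves `i·w_τ + w_{ζζ} − 2iγδ|w|²w_ζ − 2i(γ−1)δw²·conj(w)_ζ + (γ−1)(γ−2)|w|⁴w = 0`. -/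
theorem GI_gauge_to_GDNLS_equation (δ : ℝ) (hδ : δ = 1 ∨ δ = -1) (γ : ℝ)
    (u : ℝ × ℝ → ℂ) (hu : ContDiff ℝ (⊤ : ℕ∞) u)
    (h : ℝ × ℝ → ℝ) (hh : ContDiff ℝ (⊤ : ℕ∞) h)
    (hGI : ∀ z, I * pdτ u z + pdζ (pdζ u) z
      + 2 * I * (δ : ℂ) * (u z) ^ 2 * pdζ (fun y => starRingEnd ℂ (u y)) z
      + 2 * (u z * starRingEnd ℂ (u z)) ^ 2 * u z = 0)
    (hhζ : ∀ z, (pdζR h z : ℂ) = u z * starRingEnd ℂ (u z))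
    (hhτ : ∀ z, (pdτR h z : ℂ) =
      I * (starRingEnd ℂ (u z) * pdζ u z - u z * pdζ (fun y => starRingEnd ℂ (u y)) z)
      - (δ : ℂ) * (u z * starRingEnd ℂ (u z)) ^ 2) :
    ∀ z, I * pdτ (fun y => u y * Complex.exp (I * (γ : ℂ) * (δ : ℂ) * (h y : ℂ))) z
      + pdζ (pdζ (fun y => u y * Complex.exp (I * (γ : ℂ) * (δ : ℂ) * (h y : ℂ)))) z
      - 2 * I * (γ : ℂ) * (δ : ℂ)
        * ((u z * Complex.exp (I * (γ : ℂ) * (δ : ℂ) * (h z : ℂ)))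
          * starRingEnd ℂ (u z * Complex.exp (I * (γ : ℂ) * (δ : ℂ) * (h z : ℂ))))
        * pdζ (fun y => u y * Complex.exp (I * (γ : ℂ) * (δ : ℂ) * (h y : ℂ))) z
      - 2 * I * ((γ : ℂ) - 1) * (δ : ℂ)
        * (u z * Complex.exp (I * (γ : ℂ) * (δ : ℂ) * (h z : ℂ))) ^ 2
        * pdζ (fun y => starRingEnd ℂ (u y * Complex.exp (I * (γ : ℂ) * (δ : ℂ) * (h y : ℂ)))) z
      + ((γ : ℂ) - 1) * ((γ : ℂ) - 2)
        * ((u z * Complex.exp (I * (γ : ℂ) * (δ : ℂ) * (h z : ℂ)))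
          * starRingEnd ℂ (u z * Complex.exp (I * (γ : ℂ) * (δ : ℂ) * (h z : ℂ)))) ^ 2
        * (u z * Complex.exp (I * (γ : ℂ) * (δ : ℂ) * (h z : ℂ))) = 0 := by
  intro z
  set k : ℂ := I * (γ : ℂ) * (δ : ℂ) with hk
  have hb : ContDiff ℝ (⊤ : ℕ∞) (fun y => starRingEnd ℂ (u y)) := Complex.conjCLE.contDiff.comp hu
  have huζ : ∀ p : ℝ × ℝ, HasDerivAt (fun s => u (s, p.2)) (pdζ u p) p.1 := pdζ_slice hu
  have hbζ : ∀ p : ℝ × ℝ, HasDerivAt (fun s => starRingEnd ℂ (u (s, p.2)))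
      (pdζ (fun y => starRingEnd ℂ (u y)) p) p.1 := pdζ_slice hb
  have hEζ : ∀ (c : ℂ) (p : ℝ × ℝ),
      HasDerivAt (fun s => Complex.exp (c * ((h (s, p.2) : ℝ) : ℂ)))
        (c * ((pdζR h p : ℝ) : ℂ) * Complex.exp (c * ((h p : ℝ) : ℂ))) p.1 := by
    intro c p
    have h1 := (((pdζR_slice hh p).ofReal_comp).const_mul c).cexp
    simp only [Prod.mk.eta] at h1
    convert h1 using 1
    ring
  have hEτ : HasDerivAt (fun s => Complex.exp (k * ((h (z.1, s) : ℝ) : ℂ)))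
      (k * ((pdτR h z : ℝ) : ℂ) * Complex.exp (k * ((h z : ℝ) : ℂ))) z.2 := by
    have h1 := (((pdτR_slice hh z).ofReal_comp).const_mul k).cexp
    simp only [Prod.mk.eta] at h1
    convert h1 using 1
    ring
  -- first ζ-derivative of w, as a function
  have hW1 : pdζ (fun y => u y * Complex.exp (k * ((h y : ℝ) : ℂ)))
      = fun p => (pdζ u p + k * (u p * starRingEnd ℂ (u p)) * u p)
          * Complex.exp (k * ((h p : ℝ) : ℂ)) := by
    funext p
    rw [show pdζ (fun y => u y * Complex.exp (k * ((h y : ℝ) : ℂ))) p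
        = pdζ u p * Complex.exp (k * ((h p : ℝ) : ℂ))
          + u p * (k * ((pdζR h p : ℝ) : ℂ) * Complex.exp (k * ((h p : ℝ) : ℂ)))
      from ((huζ p).mul (hEζ k p)).deriv, hhζ p]
    ring
  have hW1z : pdζ (fun y => u y * Complex.exp (k * ((h y : ℝ) : ℂ))) z
      = (pdζ u z + k * (u z * starRingEnd ℂ (u z)) * u z)
          * Complex.exp (k * ((h z : ℝ) : ℂ)) := by rw [hW1]
  -- second ζ-derivative of w at z
  have hW2 : pdζ (pdζ (fun y => u y * Complex.exp (k * ((h y : ℝ) : ℂ)))) z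
      = (pdζ (pdζ u) z
          + ((k * (pdζ u z * starRingEnd ℂ (u z)
                + u z * pdζ (fun y => starRingEnd ℂ (u y)) z)) * u z
            + k * (u z * starRingEnd ℂ (u z)) * pdζ u z))
          * Complex.exp (k * ((h z : ℝ) : ℂ))
        + (pdζ u z + k * (u z * starRingEnd ℂ (u z)) * u z)
          * (k * (u z * starRingEnd ℂ (u z)) * Complex.exp (k * ((h z : ℝ) : ℂ))) := by
    rw [hW1]
    rw [show pdζ (fun p => (pdζ u p + k * (u p * starRingEnd ℂ (u p)) * u p)
          * Complex.exp (k * ((h p : ℝ) : ℂ))) z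
        = (pdζ (pdζ u) z
            + ((k * (pdζ u z * starRingEnd ℂ (u z)
                  + u z * pdζ (fun y => starRingEnd ℂ (u y)) z)) * u z
              + k * (u z * starRingEnd ℂ (u z)) * pdζ u z))
            * Complex.exp (k * ((h z : ℝ) : ℂ))
          + (pdζ u z + k * (u z * starRingEnd ℂ (u z)) * u z)
            * (k * ((pdζR h z : ℝ) : ℂ) * Complex.exp (k * ((h z : ℝ) : ℂ)))
      from (((pdζ_slice (contDiff_pdζ' hu) z).add
        ((((huζ z).mul (hbζ z)).const_mul k).mul (huζ z))).mul (hEζ k z)).deriv, hhζ z]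
  -- τ-derivative of w at z
  have hWτ : pdτ (fun y => u y * Complex.exp (k * ((h y : ℝ) : ℂ))) z
      = pdτ u z * Complex.exp (k * ((h z : ℝ) : ℂ))
        + u z * (k * (I * (starRingEnd ℂ (u z) * pdζ u z
              - u z * pdζ (fun y => starRingEnd ℂ (u y)) z)
            - (δ : ℂ) * (u z * starRingEnd ℂ (u z)) ^ 2)
          * Complex.exp (k * ((h z : ℝ) : ℂ))) := by
    rw [show pdτ (fun y => u y * Complex.exp (k * ((h y : ℝ) : ℂ))) z
        = pdτ u z * Complex.exp (k * ((h z : ℝ) : ℂ))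
          + u z * (k * ((pdτR h z : ℝ) : ℂ) * Complex.exp (k * ((h z : ℝ) : ℂ)))
      from ((pdτ_slice hu z).mul hEτ).deriv, hhτ z]
  -- conjugate of w
  have hconjpt : ∀ y, starRingEnd ℂ (u y * Complex.exp (k * ((h y : ℝ) : ℂ)))
      = starRingEnd ℂ (u y) * Complex.exp (-k * ((h y : ℝ) : ℂ)) := by
    intro y
    rw [map_mul, ← Complex.exp_conj]
    congr 1
    rw [hk]
    simp [Complex.conj_ofReal]
  have hWc : pdζ (fun y => starRingEnd ℂ (u y * Complex.exp (k * ((h y : ℝ) : ℂ)))) z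
      = pdζ (fun y => starRingEnd ℂ (u y)) z * Complex.exp (-k * ((h z : ℝ) : ℂ))
        + starRingEnd ℂ (u z) * (-k * (u z * starRingEnd ℂ (u z))
            * Complex.exp (-k * ((h z : ℝ) : ℂ))) := by
    rw [funext hconjpt]
    rw [show pdζ (fun y => starRingEnd ℂ (u y) * Complex.exp (-k * ((h y : ℝ) : ℂ))) z
        = pdζ (fun y => starRingEnd ℂ (u y)) z * Complex.exp (-k * ((h z : ℝ) : ℂ))
          + starRingEnd ℂ (u z) * (-k * ((pdζR h z : ℝ) : ℂ)
              * Complex.exp (-k * ((h z : ℝ) : ℂ)))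
      from ((hbζ z).mul (hEζ (-k) z)).deriv, hhζ z]
  have hEF : Complex.exp (k * ((h z : ℝ) : ℂ)) * Complex.exp (-k * ((h z : ℝ) : ℂ)) = 1 := by
    rw [← Complex.exp_add]
    ring_nf
    exact Complex.exp_zero
  have hd2 : (δ : ℂ) ^ 2 = 1 := by
    rcases hδ with h1 | h1 <;> rw [h1] <;> norm_num
  rw [hWτ, hW2, hW1z, hWc, hconjpt z]
  rw [hk] at hEF ⊢
  linear_combination (Complex.exp (I * (γ : ℂ) * (δ : ℂ) * ((h z : ℝ) : ℂ))) * hGI z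
    + (2 * (u z) ^ 3 * (starRingEnd ℂ (u z)) ^ 2 * Complex.exp (I * (γ : ℂ) * (δ : ℂ) * ((h z : ℝ) : ℂ))
      + 2 * (u z) ^ 3 * (starRingEnd ℂ (u z)) ^ 2 * (Complex.exp (I * (γ : ℂ) * (δ : ℂ) * ((h z : ℝ) : ℂ))) ^ 2 * Complex.exp (-(I * (γ : ℂ) * (δ : ℂ)) * ((h z : ℝ) : ℂ))
      - 3 * (γ : ℂ) * (u z) ^ 3 * (starRingEnd ℂ (u z)) ^ 2 * Complex.exp (I * (γ : ℂ) * (δ : ℂ) * ((h z : ℝ) : ℂ))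
      - 3 * (γ : ℂ) * (u z) ^ 3 * (starRingEnd ℂ (u z)) ^ 2 * (Complex.exp (I * (γ : ℂ) * (δ : ℂ) * ((h z : ℝ) : ℂ))) ^ 2 * Complex.exp (-(I * (γ : ℂ) * (δ : ℂ)) * ((h z : ℝ) : ℂ))
      + (γ : ℂ) ^ 2 * (u z) ^ 3 * (starRingEnd ℂ (u z)) ^ 2 * Complex.exp (I * (γ : ℂ) * (δ : ℂ) * ((h z : ℝ) : ℂ))
      + (γ : ℂ) ^ 2 * (u z) ^ 3 * (starRingEnd ℂ (u z)) ^ 2 * (Complex.exp (I * (γ : ℂ) * (δ : ℂ) * ((h z : ℝ) : ℂ))) ^ 2 * Complex.exp (-(I * (γ : ℂ) * (δ : ℂ)) * ((h z : ℝ) : ℂ))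
      + 2 * (δ : ℂ) ^ 2 * (γ : ℂ) * (u z) ^ 3 * (starRingEnd ℂ (u z)) ^ 2 * Complex.exp (I * (γ : ℂ) * (δ : ℂ) * ((h z : ℝ) : ℂ))
      + 2 * I * (δ : ℂ) * (u z) ^ 2 * pdζ (fun y => starRingEnd ℂ (u y)) z * Complex.exp (I * (γ : ℂ) * (δ : ℂ) * ((h z : ℝ) : ℂ))
      - 2 * I * (δ : ℂ) * (γ : ℂ) * (u z) * starRingEnd ℂ (u z) * pdζ u z * Complex.exp (I * (γ : ℂ) * (δ : ℂ) * ((h z : ℝ) : ℂ))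
      - 2 * I * (δ : ℂ) * (γ : ℂ) * (u z) ^ 2 * pdζ (fun y => starRingEnd ℂ (u y)) z * Complex.exp (I * (γ : ℂ) * (δ : ℂ) * ((h z : ℝ) : ℂ))) * hEF
    + (-(δ : ℂ) ^ 2 * (γ : ℂ) * (u z) ^ 3 * (starRingEnd ℂ (u z)) ^ 2 * Complex.exp (I * (γ : ℂ) * (δ : ℂ) * ((h z : ℝ) : ℂ))
      - 2 * (δ : ℂ) ^ 2 * (γ : ℂ) * (u z) ^ 3 * (starRingEnd ℂ (u z)) ^ 2 * (Complex.exp (I * (γ : ℂ) * (δ : ℂ) * ((h z : ℝ) : ℂ))) ^ 2 * Complex.exp (-(I * (γ : ℂ) * (δ : ℂ)) * ((h z : ℝ) : ℂ))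
      + (δ : ℂ) ^ 2 * (γ : ℂ) ^ 2 * (u z) ^ 3 * (starRingEnd ℂ (u z)) ^ 2 * Complex.exp (I * (γ : ℂ) * (δ : ℂ) * ((h z : ℝ) : ℂ))
      + I * (δ : ℂ) * (γ : ℂ) * (u z) * starRingEnd ℂ (u z) * pdζ u z * Complex.exp (I * (γ : ℂ) * (δ : ℂ) * ((h z : ℝ) : ℂ))
      - I * (δ : ℂ) * (γ : ℂ) * (u z) ^ 2 * pdζ (fun y => starRingEnd ℂ (u y)) z * Complex.exp (I * (γ : ℂ) * (δ : ℂ) * ((h z : ℝ) : ℂ))) * Complex.I_sq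
    + (3 * (γ : ℂ) * (u z) ^ 3 * (starRingEnd ℂ (u z)) ^ 2 * Complex.exp (I * (γ : ℂ) * (δ : ℂ) * ((h z : ℝ) : ℂ))
      - (γ : ℂ) ^ 2 * (u z) ^ 3 * (starRingEnd ℂ (u z)) ^ 2 * Complex.exp (I * (γ : ℂ) * (δ : ℂ) * ((h z : ℝ) : ℂ))) * hd2

end
end

section
/- Let A, B, C, d be differentiable matrix-valued functions of one real variable t with values in the complex matrices of sizes n×n, n×p, q×n, q×p respectively, with A(t) invertible for every t, and suppose the derivative of A decomposes as A'(t) = Σ_{l=1}^{k} E_l(t)·F_l(t) for differentiable matrix-valued functions E_l (size n×r_l) and F_l (size r_l×n). Then the quasi-determinant d − C·A⁻¹·B satisfies the derivative formula (d − C·A⁻¹·B)' = d' − C'·A⁻¹·B − C·A⁻¹·B' + Σ_{l=1}^{k} (C·A⁻¹·E_l)·(F_l·A⁻¹·B). -/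
/-!
Differentiating `d - C A⁻¹ B` with the product rule and `(A⁻¹)' = -A⁻¹ A' A⁻¹` gives
`d' - C' A⁻¹ B - C A⁻¹ B' + C A⁻¹ A' A⁻¹ B`; substituting `A' = Σ_l E_l F_l` and distributing
turns the last term into `Σ_l (C A⁻¹ E_l)(F_l A⁻¹ B)`.
-/

noncomputable section

/-- Entrywise derivative of a matrix-valued function of one real variable. -/
def dM {a b : Type*} (f : ℝ → Matrix a b ℂ) (t : ℝ) : Matrix a b ℂ :=
  Matrix.of fun i j => deriv (fun s => f s i j) t

open Topology

section

variable {l m n : Type*} {t : ℝ}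

theorem differentiableAt_mul_apply [Fintype m] {f : ℝ → Matrix l m ℂ} {g : ℝ → Matrix m n ℂ}
    (hf : ∀ i j, DifferentiableAt ℝ (fun s => f s i j) t)
    (hg : ∀ i j, DifferentiableAt ℝ (fun s => g s i j) t) (i : l) (j : n) :
    DifferentiableAt ℝ (fun s => (f s * g s) i j) t := by
  simp only [Matrix.mul_apply]
  exact .fun_sum fun x _ => (hf i x).mul (hg x j)

theorem dM_sub {f g : ℝ → Matrix l n ℂ}
    (hf : ∀ i j, DifferentiableAt ℝ (fun s => f s i j) t)
    (hg : ∀ i j, DifferentiableAt ℝ (fun s => g s i j) t) :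
    dM (fun s => f s - g s) t = dM f t - dM g t := by
  ext i j
  exact deriv_sub (hf i j) (hg i j)

theorem dM_mul [Fintype m] {f : ℝ → Matrix l m ℂ} {g : ℝ → Matrix m n ℂ}
    (hf : ∀ i j, DifferentiableAt ℝ (fun s => f s i j) t)
    (hg : ∀ i j, DifferentiableAt ℝ (fun s => g s i j) t) :
    dM (fun s => f s * g s) t = dM f t * g t + f t * dM g t := by
  ext i j
  have hder : HasDerivAt (fun s => (f s * g s) i j)
      (∑ x, (dM f t i x * g t x j + f t i x * dM g t x j)) t := by
    simp only [Matrix.mul_apply]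
    exact HasDerivAt.fun_sum fun x _ => (hf i x).hasDerivAt.mul (hg x j).hasDerivAt
  rw [Matrix.add_apply, Matrix.mul_apply, Matrix.mul_apply, ← Finset.sum_add_distrib]
  exact hder.deriv

variable [Fintype n] [DecidableEq n]

theorem differentiableAt_det {M : ℝ → Matrix n n ℂ}
    (hM : ∀ i j, DifferentiableAt ℝ (fun s => M s i j) t) :
    DifferentiableAt ℝ (fun s => (M s).det) t := by
  simp only [Matrix.det_apply']
  exact .fun_sum fun σ _ => (DifferentiableAt.fun_finsetProd fun i _ => hM (σ i) i).const_mul _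

theorem differentiableAt_adjugate_apply {M : ℝ → Matrix n n ℂ}
    (hM : ∀ i j, DifferentiableAt ℝ (fun s => M s i j) t) (i j : n) :
    DifferentiableAt ℝ (fun s => (M s).adjugate i j) t := by
  simp only [Matrix.adjugate_apply]
  refine differentiableAt_det fun i' j' => ?_
  by_cases h : i' = j <;> simp [Matrix.updateRow_apply, h, hM i' j']

theorem differentiableAt_inv_apply {M : ℝ → Matrix n n ℂ}
    (hM : ∀ i j, DifferentiableAt ℝ (fun s => M s i j) t) (hMt : IsUnit (M t)) (i j : n) :
    DifferentiableAt ℝ (fun s => (M s)⁻¹ i j) t := by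
  have hdet : (M t).det ≠ 0 := ((Matrix.isUnit_iff_isUnit_det _).mp hMt).ne_zero
  simp only [Matrix.inv_def, Matrix.smul_apply, Ring.inverse_eq_inv']
  exact ((differentiableAt_det hM).inv hdet).mul (differentiableAt_adjugate_apply hM i j)

theorem dM_inv {M : ℝ → Matrix n n ℂ}
    (hM : ∀ i j, DifferentiableAt ℝ (fun s => M s i j) t) (hMt : IsUnit (M t)) :
    dM (fun s => (M s)⁻¹) t = -((M t)⁻¹ * dM M t * (M t)⁻¹) := by
  have hdet : IsUnit (M t).det := (Matrix.isUnit_iff_isUnit_det _).mp hMt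
  have hev : (fun s => M s * (M s)⁻¹) =ᶠ[𝓝 t] fun _ => 1 := by
    filter_upwards [(differentiableAt_det hM).continuousAt.eventually_ne hdet.ne_zero] with s hs
    exact Matrix.mul_nonsing_inv _ (isUnit_iff_ne_zero.mpr hs)
  have hzero : dM (fun s => M s * (M s)⁻¹) t = 0 := by
    ext i j
    exact (hev.fun_comp fun X => X i j).deriv_eq.trans (deriv_const _ _)
  rw [dM_mul hM (differentiableAt_inv_apply hM hMt)] at hzero
  have hleft := congrArg ((M t)⁻¹ * ·) (eq_neg_of_add_eq_zero_right hzero)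
  simp only [← Matrix.mul_assoc, Matrix.nonsing_inv_mul _ hdet, Matrix.one_mul,
    Matrix.mul_neg] at hleft
  rw [hleft, Matrix.mul_assoc]

theorem dM_quasideterminant [Fintype m]
    {A : ℝ → Matrix n n ℂ} {B : ℝ → Matrix n m ℂ} {C : ℝ → Matrix l n ℂ}
    {d : ℝ → Matrix l m ℂ}
    (hA : ∀ i j, DifferentiableAt ℝ (fun s => A s i j) t)
    (hB : ∀ i j, DifferentiableAt ℝ (fun s => B s i j) t)
    (hC : ∀ i j, DifferentiableAt ℝ (fun s => C s i j) t)
    (hd : ∀ i j, DifferentiableAt ℝ (fun s => d s i j) t) (hAt : IsUnit (A t)) :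
    dM (fun s => d s - C s * (A s)⁻¹ * B s) t =
      dM d t - dM C t * (A t)⁻¹ * B t - C t * (A t)⁻¹ * dM B t
        + C t * (A t)⁻¹ * dM A t * (A t)⁻¹ * B t := by
  have hAinv := differentiableAt_inv_apply hA hAt
  have hCAinv := differentiableAt_mul_apply hC hAinv
  rw [dM_sub hd (differentiableAt_mul_apply hCAinv hB), dM_mul hCAinv hB, dM_mul hC hAinv,
    dM_inv hA hAt]
  simp only [Matrix.add_mul, Matrix.mul_neg, Matrix.neg_mul, Matrix.mul_assoc]
  abel

end

theorem quasideterminant_derivative_formula_general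
    (n p q k : ℕ) (r : Fin k → ℕ)
    (A : ℝ → Matrix (Fin n) (Fin n) ℂ)
    (B : ℝ → Matrix (Fin n) (Fin p) ℂ)
    (C : ℝ → Matrix (Fin q) (Fin n) ℂ)
    (d : ℝ → Matrix (Fin q) (Fin p) ℂ)
    (E : (l : Fin k) → ℝ → Matrix (Fin n) (Fin (r l)) ℂ)
    (F : (l : Fin k) → ℝ → Matrix (Fin (r l)) (Fin n) ℂ)
    (hA : ∀ i j, Differentiable ℝ fun t => A t i j)
    (hB : ∀ i j, Differentiable ℝ fun t => B t i j)
    (hC : ∀ i j, Differentiable ℝ fun t => C t i j)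
    (hd : ∀ i j, Differentiable ℝ fun t => d t i j)
    (hAinv : ∀ t, IsUnit (A t))
    (hdecomp : ∀ t, dM A t = ∑ l : Fin k, E l t * F l t) :
    ∀ t, dM (fun s => d s - C s * (A s)⁻¹ * B s) t =
      dM d t - dM C t * (A t)⁻¹ * B t - C t * (A t)⁻¹ * dM B t
      + ∑ l : Fin k, (C t * (A t)⁻¹ * E l t) * (F l t * (A t)⁻¹ * B t) := by
  intro t
  rw [dM_quasideterminant (fun i j => hA i j t) (fun i j => hB i j t) (fun i j => hC i j t)
    (fun i j => hd i j t) (hAinv t), hdecomp t]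
  simp only [Matrix.mul_sum, Matrix.sum_mul, Matrix.mul_assoc]

/-- **Derivative formula for quasi-determinants (Gilson–Nimmo).**
If `A` is a pointwise invertible `n×n` matrix function whose derivative decomposes as
`A' = Σ_{l=1}^{k} E_l·F_l`, then the quasi-determinant `d − C·A⁻¹·B` satisfies
`(d − CA⁻¹B)' = d' − C'A⁻¹B − CA⁻¹B' + Σ_l (CA⁻¹E_l)(F_l A⁻¹B)`. -/
theorem quasideterminant_derivative_formula
    (n p q k : ℕ) (r : Fin k → ℕ)
    (A : ℝ → Matrix (Fin n) (Fin n) ℂ)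
    (B : ℝ → Matrix (Fin n) (Fin p) ℂ)
    (C : ℝ → Matrix (Fin q) (Fin n) ℂ)
    (d : ℝ → Matrix (Fin q) (Fin p) ℂ)
    (E : (l : Fin k) → ℝ → Matrix (Fin n) (Fin (r l)) ℂ)
    (F : (l : Fin k) → ℝ → Matrix (Fin (r l)) (Fin n) ℂ)
    (hA : ∀ i j, Differentiable ℝ fun t => A t i j)
    (hB : ∀ i j, Differentiable ℝ fun t => B t i j)
    (hC : ∀ i j, Differentiable ℝ fun t => C t i j)
    (hd : ∀ i j, Differentiable ℝ fun t => d t i j)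
    (hE : ∀ l i j, Differentiable ℝ fun t => E l t i j)
    (hF : ∀ l i j, Differentiable ℝ fun t => F l t i j)
    (hAinv : ∀ t, IsUnit (A t))
    (hdecomp : ∀ t, dM A t = ∑ l : Fin k, E l t * F l t) :
    ∀ t, dM (fun s => d s - C s * (A s)⁻¹ * B s) t =
      dM d t - dM C t * (A t)⁻¹ * B t - C t * (A t)⁻¹ * dM B t
      + ∑ l : Fin k, (C t * (A t)⁻¹ * E l t) * (F l t * (A t)⁻¹ * B t) :=
  quasideterminant_derivative_formula_general n p q k r A B C d E F hA hB hC hd hAinv hdecomp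

end
end
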